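/- Let m, n be positive reals with m ≠ n, and 0 ≤ s ≤ t ≤ 1. Then the integral J(s,t) = ∫_s^t (cos(m π r) - cos(m π s)) · (-n π sin(n π r)) dr satisfies |J(s,t)| ≤ C(n/|n - m| + 1) for an absolute constant C. -/

import Mathlib

/-!
Write `a = m π`, `b = n π`. By the product-to-sum formula `cos (a r) sin (b r)` has the primitive
`cos ((a - b) r) / (2 (a - b)) - cos ((a + b) r) / (2 (a + b))`, so `J` is a combination of
differences of cosines with coefficients `cos (a s)`, `b / (2 (a - b))` and `b / (2 (a + b))`.
All are bounded except `b / (2 |a - b|) = n / (2 |n - m|)`, the resonance factor.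
-/

open Real intervalIntegral

namespace Real

theorem abs_cos_sub_cos_le_two (x y : ℝ) : |cos x - cos y| ≤ 2 := by
  calc |cos x - cos y| ≤ |cos x| + |cos y| := abs_sub _ _
    _ ≤ 1 + 1 := add_le_add (abs_cos_le_one x) (abs_cos_le_one y)
    _ = 2 := by norm_num

theorem hasDerivAt_cos_mul (k x : ℝ) :
    HasDerivAt (fun r => cos (k * r)) (-(k * sin (k * x))) x := by
  simpa [mul_comm] using ((hasDerivAt_id x).const_mul k).cos

theorem abs_cos_div_sub_cos_div_le (d x y : ℝ) :
    |cos x / (2 * d) - cos y / (2 * d)| ≤ 1 / |d| := by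
  rcases eq_or_ne d 0 with rfl | hd
  · simp
  rw [← sub_div, abs_div, abs_mul, abs_two,
    div_le_div_iff₀ (by positivity) (abs_pos.mpr hd)]
  nlinarith [abs_cos_sub_cos_le_two x y, abs_nonneg d]

end Real

noncomputable def cosMulSinPrimitive (a b r : ℝ) : ℝ :=
  cos ((a - b) * r) / (2 * (a - b)) - cos ((a + b) * r) / (2 * (a + b))

theorem hasDerivAt_cosMulSinPrimitive {a b : ℝ} (hsub : a - b ≠ 0) (hadd : a + b ≠ 0) (r : ℝ) :
    HasDerivAt (cosMulSinPrimitive a b) (cos (a * r) * sin (b * r)) r := by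
  have h := ((hasDerivAt_cos_mul (a - b) r).div_const (2 * (a - b))).sub
    ((hasDerivAt_cos_mul (a + b) r).div_const (2 * (a + b)))
  refine h.congr_deriv ?_
  rw [show (a - b) * r = a * r - b * r by ring, show (a + b) * r = a * r + b * r by ring,
    sin_sub, sin_add]
  field_simp
  ring

theorem abs_cosMulSinPrimitive_sub_le (a b s t : ℝ) :
    |cosMulSinPrimitive a b t - cosMulSinPrimitive a b s| ≤ 1 / |a - b| + 1 / |a + b| := by
  unfold cosMulSinPrimitive
  calc _ = |(cos ((a - b) * t) / (2 * (a - b)) - cos ((a - b) * s) / (2 * (a - b)))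
          - (cos ((a + b) * t) / (2 * (a + b)) - cos ((a + b) * s) / (2 * (a + b)))| := by
        congr 1; ring
    _ ≤ _ := (abs_sub _ _).trans (add_le_add (abs_cos_div_sub_cos_div_le _ _ _)
        (abs_cos_div_sub_cos_div_le _ _ _))

theorem integral_cos_sub_mul_sin {a b : ℝ} (hsub : a - b ≠ 0) (hadd : a + b ≠ 0) (c s t : ℝ) :
    ∫ r in s..t, (cos (a * r) - c) * (-(b * sin (b * r))) =
      c * (cos (b * s) - cos (b * t)) -
        b * (cosMulSinPrimitive a b t - cosMulSinPrimitive a b s) := by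
  have hderiv (r : ℝ) : HasDerivAt (fun r => -b * cosMulSinPrimitive a b r - c * cos (b * r))
      ((cos (a * r) - c) * (-(b * sin (b * r)))) r :=
    (((hasDerivAt_cosMulSinPrimitive hsub hadd r).const_mul (-b)).sub
      ((hasDerivAt_cos_mul b r).const_mul c)).congr_deriv (by ring)
  rw [integral_eq_sub_of_hasDerivAt (fun r _ => hderiv r)
    (Continuous.intervalIntegrable (by fun_prop) s t)]
  ring

theorem abs_integral_cos_sub_mul_sin_le {a b : ℝ} (ha : 0 < a) (hb : 0 < b) (hab : a ≠ b)
    {c : ℝ} (hc : |c| ≤ 1) (s t : ℝ) :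
    |∫ r in s..t, (cos (a * r) - c) * (-(b * sin (b * r)))| ≤ b / |a - b| + 3 := by
  rw [integral_cos_sub_mul_sin (sub_ne_zero.mpr hab) (by positivity)]
  have hcos : |c * (cos (b * s) - cos (b * t))| ≤ 2 := by
    rw [abs_mul]
    nlinarith [abs_cos_sub_cos_le_two (b * s) (b * t), abs_nonneg c,
      abs_nonneg (cos (b * s) - cos (b * t))]
  have hprim : |b * (cosMulSinPrimitive a b t - cosMulSinPrimitive a b s)| ≤ b / |a - b| + 1 := by
    have hadd : b / |a + b| ≤ 1 := by
      rw [abs_of_pos (by positivity), div_le_one (by positivity)]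
      linarith
    rw [abs_mul, abs_of_pos hb]
    calc _ ≤ b * (1 / |a - b| + 1 / |a + b|) :=
          mul_le_mul_of_nonneg_left (abs_cosMulSinPrimitive_sub_le a b s t) hb.le
      _ ≤ b / |a - b| + 1 := by rw [mul_add, mul_one_div, mul_one_div]; linarith
  linarith [abs_sub (c * (cos (b * s) - cos (b * t)))
    (b * (cosMulSinPrimitive a b t - cosMulSinPrimitive a b s))]

theorem bound_iv_resonance :
    ∃ C > 0, ∀ (s t m n : ℝ), 0 ≤ s → s ≤ t → t ≤ 1 → 0 < m → 0 < n → m ≠ n →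
      |∫ r in s..t, (Real.cos (m * π * r) - Real.cos (m * π * s)) *
          (-(n * π * Real.sin (n * π * r)))| ≤ C * (n / |n - m| + 1) := by
  refine ⟨3, by norm_num, fun s t m n _ _ _ hm hn hmn => ?_⟩
  have hratio : n * π / |m * π - n * π| = n / |n - m| := by
    rw [← sub_mul, abs_mul, abs_of_pos pi_pos, abs_sub_comm, mul_div_mul_right _ _ pi_ne_zero]
  have h := abs_integral_cos_sub_mul_sin_le (by positivity) (by positivity)
    (fun h => hmn (mul_right_cancel₀ pi_ne_zero h)) (abs_cos_le_one (m * π * s)) s t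
  rw [hratio] at h
  linarith [div_nonneg hn.le (abs_nonneg (n - m))]
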